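/- arXiv:2408.08758 — 11 statements merged into one kernel-verified Lean document; each statement's English description precedes it below -/
import Mathlib

section
/- Every minimal prime ideal of the Anderson ring R[X]_A is of the form P·R[X]_A for some minimal prime ideal P of R, and the assignment P ↦ P·R[X]_A is a one-to-one correspondence between the minimal prime ideals of R and the minimal prime ideals of R[X]_A. -/
open Polynomial

/-- The multiplicative set `A = {f ∈ R[X] : f(0) = 1}` of polynomials
with constant term `1`. -/
def andersonSubmonoid (R : Type*) [CommRing R] : Submonoid (Polynomial R) where
  carrier := {f | f.coeff 0 = 1}
  one_mem' := by simp
  mul_mem' := by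
    intro a b ha hb
    simp only [Set.mem_setOf_eq, Polynomial.mul_coeff_zero] at *
    rw [ha, hb, mul_one]

/-- The Anderson ring `R[X]_A`, the localization of `R[X]` at `A`. -/
abbrev AndersonRing (R : Type*) [CommRing R] := Localization (andersonSubmonoid R)

/-- The canonical ring homomorphism `R → R[X]_A`. -/
noncomputable def andersonMap (R : Type*) [CommRing R] : R →+* AndersonRing R :=
  (algebraMap (Polynomial R) (AndersonRing R)).comp Polynomial.C

/-!
Extension along `R → R[X]_A` sends a prime `P` to a prime lying over `P`: `P[X]` is prime and
misses `A`, since the constant term of an element of `P[X]` lies in `P`. For any ring map with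
this property, a minimal prime `Q` upstairs contains the extension of a minimal prime below
`Q ∩ R`, hence equals it; and contracting recovers `P`, which gives injectivity and minimality
of extended minimal primes.
-/

namespace Ideal

variable {R S : Type*} [CommRing R] [CommRing S] {f : R →+* S}

theorem exists_mem_minimalPrimes_eq_map
    (hprime : ∀ P : Ideal R, P.IsPrime → (P.map f).IsPrime)
    {Q : Ideal S} (hQ : Q ∈ minimalPrimes S) :
    ∃ P ∈ minimalPrimes R, Q = P.map f := by
  have : Q.IsPrime := hQ.1.1
  obtain ⟨P, hP, hPQ⟩ := exists_minimalPrimes_le (bot_le (a := Q.comap f))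
  have hle : P.map f ≤ Q := map_le_iff_le_comap.2 hPQ
  rw [minimalPrimes_eq_minimals] at hQ
  exact ⟨P, hP, (hQ.eq_of_le (hprime P hP.1.1) hle).symm⟩

theorem map_mem_minimalPrimes
    (hprime : ∀ P : Ideal R, P.IsPrime → (P.map f).IsPrime)
    (hcomap : ∀ P : Ideal R, P.IsPrime → (P.map f).comap f = P)
    {P : Ideal R} (hP : P ∈ minimalPrimes R) :
    P.map f ∈ minimalPrimes S := by
  rw [minimalPrimes_eq_minimals] at hP ⊢
  refine ⟨hprime P hP.1, fun Q hQ hQP => ?_⟩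
  have : Q.IsPrime := hQ
  have hcomapQ : Q.comap f ≤ P := hcomap P hP.1 ▸ comap_mono hQP
  exact map_le_iff_le_comap.2 (hP.eq_of_le inferInstance hcomapQ).ge

theorem bijOn_map_minimalPrimes
    (hprime : ∀ P : Ideal R, P.IsPrime → (P.map f).IsPrime)
    (hcomap : ∀ P : Ideal R, P.IsPrime → (P.map f).comap f = P) :
    Set.BijOn (fun P : Ideal R => P.map f) (minimalPrimes R) (minimalPrimes S) := by
  refine ⟨fun P hP => map_mem_minimalPrimes hprime hcomap hP, fun P hP P' hP' h => ?_,
    fun Q hQ => ?_⟩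
  · rw [← hcomap P hP.1.1, ← hcomap P' hP'.1.1]
    exact congrArg (comap f) h
  · obtain ⟨P, hP, rfl⟩ := exists_mem_minimalPrimes_eq_map hprime hQ
    exact ⟨P, hP, rfl⟩

end Ideal

section Anderson

variable {R : Type*} [CommRing R]

theorem Polynomial.comap_C_map_C (P : Ideal R) : (P.map (C : R →+* R[X])).comap C = P :=
  le_antisymm (fun x hx => by simpa using Ideal.mem_map_C_iff.1 hx 0) Ideal.le_comap_map

theorem disjoint_andersonSubmonoid_map_C {P : Ideal R} (hP : P ≠ ⊤) :
    Disjoint (andersonSubmonoid R : Set R[X]) (P.map (C : R →+* R[X])) := by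
  refine Set.disjoint_left.2 fun g (hg : g.coeff 0 = 1) hgP => hP ?_
  rw [Ideal.eq_top_iff_one, ← hg]
  exact Ideal.mem_map_C_iff.1 hgP 0

theorem map_andersonMap (P : Ideal R) :
    P.map (andersonMap R) = (P.map (C : R →+* R[X])).map (algebraMap R[X] (AndersonRing R)) := by
  rw [andersonMap, Ideal.map_map]

theorem isPrime_map_andersonMap {P : Ideal R} (hP : P.IsPrime) :
    (P.map (andersonMap R)).IsPrime := by
  rw [map_andersonMap]
  exact IsLocalization.isPrime_of_isPrime_disjoint (andersonSubmonoid R) _ _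
    ((Ideal.isPrime_map_C_iff_isPrime P).2 hP) (disjoint_andersonSubmonoid_map_C hP.ne_top)

theorem comap_map_andersonMap {P : Ideal R} (hP : P.IsPrime) :
    (P.map (andersonMap R)).comap (andersonMap R) = P := by
  rw [map_andersonMap, andersonMap, ← Ideal.comap_comap, ← Ideal.under_def,
    IsLocalization.under_map_of_isPrime_disjoint (andersonSubmonoid R) (AndersonRing R)
      ((Ideal.isPrime_map_C_iff_isPrime P).2 hP) (disjoint_andersonSubmonoid_map_C hP.ne_top),
    comap_C_map_C]

end Anderson

/-- Every minimal prime ideal of the Anderson ring `R[X]_A` is the extension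
`P·R[X]_A` of a minimal prime ideal `P` of `R`, and `P ↦ P·R[X]_A` is a
one-to-one correspondence between the minimal primes of `R` and those of `R[X]_A`. -/
theorem anderson_minimalPrimes (R : Type*) [CommRing R] :
    (∀ Q ∈ minimalPrimes (AndersonRing R),
      ∃ P ∈ minimalPrimes R, Q = Ideal.map (andersonMap R) P) ∧
    Set.BijOn (fun P : Ideal R => Ideal.map (andersonMap R) P)
      (minimalPrimes R) (minimalPrimes (AndersonRing R)) :=
  ⟨fun _ hQ => Ideal.exists_mem_minimalPrimes_eq_map (fun _ => isPrime_map_andersonMap) hQ,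
    Ideal.bijOn_map_minimalPrimes (fun _ => isPrime_map_andersonMap)
      (fun _ => comap_map_andersonMap)⟩
end

section
/- An ideal of the Anderson ring R[X]_A is maximal if and only if it equals (M + XR[X])·R[X]_A for some maximal ideal M of R; moreover, the assignment M ↦ (M + XR[X])·R[X]_A is a one-to-one correspondence between the maximal ideals of R and the maximal ideals of R[X]_A. -/
open Polynomial

/-!
`R[X]_A` is the localization of `R[X]` at the fibre `A = ev₀⁻¹(1)` of the surjection
`ev₀ : R[X] → R`, and `M + XR[X] = ev₀⁻¹(M)`. For any surjection `φ : S → R` and any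
localization `L` of `S` at `φ⁻¹(1)`:
* a proper ideal `J` of `L` contains no image of `φ⁻¹(1)`, so `φ(J ∩ S)` is proper and `J` lies
  in `φ⁻¹(M)·L` for a maximal ideal `M ⊇ φ(J ∩ S)`;
* since `φ` is `1` on `φ⁻¹(1)`, contracting `φ⁻¹(M)·L` to `S` gives back `φ⁻¹(M)`, so
  `M ↦ φ⁻¹(M)·L` is an order embedding.
Together these say that the maximal ideals of `L` are exactly the `φ⁻¹(M)·L`, `M` maximal.
-/

namespace IsLocalization

variable {S R L : Type*} [CommRing S] [CommRing R] [CommRing L] [Algebra S L]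
  (φ : S →+* R) (T : Submonoid S) [IsLocalization T L]

theorem comap_map_comap_of_map_eq_one (hT : ∀ t ∈ T, φ t = 1) (M : Ideal R) :
    ((M.comap φ).map (algebraMap S L)).comap (algebraMap S L) = M.comap φ := by
  refine le_antisymm (fun s hs => ?_) Ideal.le_comap_map
  obtain ⟨t, ht, hts⟩ := (algebraMap_mem_map_algebraMap_iff T L _ s).1 hs
  simpa [hT t ht] using hts

noncomputable def mapComapOrderEmbedding (hφ : Function.Surjective φ) (hT : ∀ t ∈ T, φ t = 1) :
    Ideal R ↪o Ideal L :=
  OrderEmbedding.ofMapLEIff (fun M => (M.comap φ).map (algebraMap S L)) fun M M' => by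
    refine ⟨fun h => ?_, fun h => Ideal.map_mono (Ideal.comap_mono h)⟩
    have := Ideal.comap_mono (f := algebraMap S L) h
    rwa [comap_map_comap_of_map_eq_one φ T hT, comap_map_comap_of_map_eq_one φ T hT,
      Ideal.comap_le_comap_iff_of_surjective φ hφ] at this

theorem exists_isMaximal_le_map_comap (hφ : Function.Surjective φ)
    (hT : ∀ s, φ s = 1 → s ∈ T) {J : Ideal L} (hJ : J ≠ ⊤) :
    ∃ M : Ideal R, M.IsMaximal ∧ J ≤ (M.comap φ).map (algebraMap S L) := by
  have hproper : (J.comap (algebraMap S L)).map φ ≠ ⊤ := by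
    intro htop
    obtain ⟨s, hsJ, hs⟩ := Ideal.mem_image_of_mem_map_of_surjective φ hφ
      ((Ideal.eq_top_iff_one _).1 htop)
    exact hJ (Ideal.eq_top_of_isUnit_mem _ hsJ (map_units L ⟨s, hT s hs⟩))
  obtain ⟨M, hM, hle⟩ := Ideal.exists_le_maximal _ hproper
  refine ⟨M, hM, ?_⟩
  rw [← map_under T L J]
  exact Ideal.map_mono (Ideal.map_le_iff_le_comap.1 hle)

variable {φ T}

theorem isMaximal_map_comap (hφ : Function.Surjective φ) (hT : ∀ s, s ∈ T ↔ φ s = 1)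
    {M : Ideal R} (hM : M.IsMaximal) : ((M.comap φ).map (algebraMap S L)).IsMaximal := by
  set e := mapComapOrderEmbedding (L := L) φ T hφ fun t => (hT t).1
  have he_top : e ⊤ = ⊤ := by simp [e, mapComapOrderEmbedding, Ideal.map_top]
  refine ⟨⟨fun h => hM.ne_top (e.injective (h.trans he_top.symm)), fun J hMJ => ?_⟩⟩
  by_contra hJ
  obtain ⟨M', hM', hJM'⟩ := exists_isMaximal_le_map_comap φ T hφ (fun s => (hT s).2) hJ
  exact hM'.ne_top (hM.out.2 M' (e.lt_iff_lt.1 (hMJ.trans_le hJM')))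

theorem isMaximal_iff_exists_eq_map_comap (hφ : Function.Surjective φ)
    (hT : ∀ s, s ∈ T ↔ φ s = 1) (J : Ideal L) :
    J.IsMaximal ↔ ∃ M : Ideal R, M.IsMaximal ∧ J = (M.comap φ).map (algebraMap S L) := by
  refine ⟨fun hJ => ?_, ?_⟩
  · obtain ⟨M, hM, hle⟩ := exists_isMaximal_le_map_comap φ T hφ (fun s => (hT s).2) hJ.ne_top
    exact ⟨M, hM, hJ.eq_of_le (isMaximal_map_comap hφ hT hM).ne_top hle⟩
  · rintro ⟨M, hM, rfl⟩
    exact isMaximal_map_comap hφ hT hM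

end IsLocalization

theorem Polynomial.comap_constantCoeff_eq {R : Type*} [CommRing R] (M : Ideal R) :
    M.comap constantCoeff = M.map C ⊔ Ideal.span {(X : R[X])} := by
  calc M.comap constantCoeff = ((M.map C).map constantCoeff).comap constantCoeff := by
        rw [Ideal.map_map,
          show constantCoeff.comp C = RingHom.id R from RingHom.ext fun _ => coeff_C_zero,
          Ideal.map_id]
    _ = M.map C ⊔ RingHom.ker constantCoeff :=
        Ideal.comap_map_of_surjective _ constantCoeff_surjective _
    _ = M.map C ⊔ Ideal.span {X} := by rw [ker_constantCoeff]

/-- An ideal of `R[X]_A` is maximal iff it is `(M + XR[X])·R[X]_A` for some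
maximal ideal `M` of `R`, and `M ↦ (M + XR[X])·R[X]_A` is a one-to-one
correspondence between the maximal ideals of `R` and those of `R[X]_A`. -/
theorem anderson_maximal_ideals (R : Type*) [CommRing R] :
    (∀ m : Ideal (AndersonRing R), m.IsMaximal ↔
      ∃ M : Ideal R, M.IsMaximal ∧
        m = Ideal.map (algebraMap (Polynomial R) (AndersonRing R))
              (Ideal.map (Polynomial.C : R →+* Polynomial R) M ⊔
                Ideal.span {(Polynomial.X : Polynomial R)})) ∧
    Set.BijOn (fun M : Ideal R =>
        Ideal.map (algebraMap (Polynomial R) (AndersonRing R))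
          (Ideal.map (Polynomial.C : R →+* Polynomial R) M ⊔
            Ideal.span {(Polynomial.X : Polynomial R)}))
      {M : Ideal R | M.IsMaximal}
      {m : Ideal (AndersonRing R) | m.IsMaximal} := by
  have hT : ∀ f, f ∈ andersonSubmonoid R ↔ constantCoeff f = 1 := fun _ => Iff.rfl
  have hφ : Function.Surjective (constantCoeff : R[X] →+* R) := constantCoeff_surjective
  let e := IsLocalization.mapComapOrderEmbedding (L := AndersonRing R) _ _ hφ fun f => (hT f).1
  simp only [← comap_constantCoeff_eq]
  refine ⟨IsLocalization.isMaximal_iff_exists_eq_map_comap hφ hT,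
    fun M hM => IsLocalization.isMaximal_map_comap hφ hT hM, e.injective.injOn, fun m hm => ?_⟩
  obtain ⟨M, hM, rfl⟩ := (IsLocalization.isMaximal_iff_exists_eq_map_comap hφ hT m).1 hm
  exact ⟨M, hM, rfl⟩
end

section
/- A commutative ring R with identity is local (i.e., has a unique maximal ideal) if and only if its Anderson ring R[X]_A is local. -/
/-!
The ring `R` is a retract of `R[X]_A`: evaluation at `0` sends every element of `A` to `1`, so
it extends to a surjection `R[X]_A → R` split by `andersonMap`, which settles `R[X]_A` local
`⟹` `R` local. Conversely, this evaluation is a local homomorphism: if `f(0)` is a unit `u`,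
then `u⁻¹ f ∈ A`, so `f` and hence `f / s` is a unit in `R[X]_A`; and a ring with a local
homomorphism to a local ring is local.
-/

open Polynomial

namespace AndersonRing

variable (R : Type*) [CommRing R]

theorem mem_andersonSubmonoid {f : R[X]} : f ∈ andersonSubmonoid R ↔ f.coeff 0 = 1 :=
  Iff.rfl

noncomputable def evalZero : AndersonRing R →+* R :=
  IsLocalization.lift (M := andersonSubmonoid R) (g := evalRingHom 0) fun s => by
    simp [← coeff_zero_eq_eval_zero, (mem_andersonSubmonoid R).mp s.2]

variable {R}

@[simp]
theorem evalZero_algebraMap (f : R[X]) :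
    evalZero R (algebraMap R[X] (AndersonRing R) f) = f.coeff 0 := by
  rw [evalZero, IsLocalization.lift_eq, coe_evalRingHom, coeff_zero_eq_eval_zero]

theorem evalZero_surjective : Function.Surjective (evalZero R) := fun r =>
  ⟨andersonMap R r, by simp [andersonMap]⟩

theorem isUnit_algebraMap_of_isUnit_coeff_zero {f : R[X]} (hf : IsUnit (f.coeff 0)) :
    IsUnit (algebraMap R[X] (AndersonRing R) f) := by
  obtain ⟨u, hu⟩ := hf
  have hmem : C (↑u⁻¹ : R) * f ∈ andersonSubmonoid R := by
    simp [mem_andersonSubmonoid, mul_coeff_zero, ← hu]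
  have hf : f = C (u : R) * (C (↑u⁻¹ : R) * f) := by
    rw [← mul_assoc, ← C_mul, Units.mul_inv, C_1, one_mul]
  rw [hf, map_mul]
  exact ((isUnit_C.mpr u.isUnit).map _).mul (IsLocalization.map_units _ ⟨_, hmem⟩)

instance isLocalHom_evalZero : IsLocalHom (evalZero R) where
  map_nonunit x hx := by
    obtain ⟨⟨f, s⟩, rfl⟩ := IsLocalization.mk'_surjective (andersonSubmonoid R) x
    have hspec := IsLocalization.mk'_spec (AndersonRing R) f s
    have heval : evalZero R (IsLocalization.mk' _ f s) = f.coeff 0 := by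
      simpa only [map_mul, evalZero_algebraMap, (mem_andersonSubmonoid R).mp s.2, mul_one]
        using congrArg (evalZero R) hspec
    have hf := isUnit_algebraMap_of_isUnit_coeff_zero (heval ▸ hx)
    rw [← hspec] at hf
    exact isUnit_of_mul_isUnit_left hf

end AndersonRing

/-- `R` is a local ring iff its Anderson ring `R[X]_A` is a local ring. -/
theorem anderson_isLocalRing_iff (R : Type*) [CommRing R] :
    IsLocalRing R ↔ IsLocalRing (AndersonRing R) := by
  constructor
  · intro _
    exact (AndersonRing.evalZero R).domain_isLocalRing
  · intro _
    have : Nontrivial R := (andersonMap R).domain_nontrivial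
    exact IsLocalRing.of_surjective' _ AndersonRing.evalZero_surjective
end

section
/- The Anderson ring R[X]_A has finite character (i.e., every nonzero nonunit element of R[X]_A belongs to only finitely many maximal ideals of R[X]_A) if and only if R has only finitely many maximal ideals. -/
/-!
The constant-coefficient map `R[X] → R` sends `A` to `1`, so it extends to a surjection
`ψ : R[X]_A → R`. Its kernel lies in the Jacobson radical: if `f(0) = 0` and `s ∈ A` then
`1 + f/s = (s + f)/s` with `s + f ∈ A`. Hence `M ↦ ψ⁻¹(M)` is a bijection from the maximal
ideals of `R` onto those of `R[X]_A`. When `R ≠ 0`, the image of `X` is a nonzero element of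
the Jacobson radical, i.e. a nonzero nonunit lying in every maximal ideal, so finite character
forces finitely many maximal ideals; the converse holds in any ring.
-/

open Polynomial

namespace Ideal

variable {A B : Type*} [Ring A] [Ring B] {f : A →+* B}

theorem IsMaximal.jacobson_bot_le {m : Ideal A} (hm : m.IsMaximal) : jacobson ⊥ ≤ m :=
  sInf_le ⟨bot_le, hm⟩

theorem setOf_isMaximal_eq_image_comap_of_ker_le_jacobson (hf : Function.Surjective f)
    (hker : RingHom.ker f ≤ jacobson ⊥) :
    {Q : Ideal A | Q.IsMaximal} = comap f '' {M : Ideal B | M.IsMaximal} := by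
  ext Q
  constructor
  · intro (hQ : Q.IsMaximal)
    have hkerQ : RingHom.ker f ≤ Q := hker.trans hQ.jacobson_bot_le
    refine ⟨Q.map f, IsMaximal.map_of_surjective_of_ker_le hf hkerQ, ?_⟩
    rw [comap_map_of_surjective _ hf, ← RingHom.ker_eq_comap_bot, sup_of_le_left hkerQ]
  · rintro ⟨M, hM, rfl⟩
    exact comap_isMaximal_of_surjective f hf (H := hM)

theorem finite_setOf_isMaximal_iff_of_ker_le_jacobson (hf : Function.Surjective f)
    (hker : RingHom.ker f ≤ jacobson ⊥) :
    {Q : Ideal A | Q.IsMaximal}.Finite ↔ {M : Ideal B | M.IsMaximal}.Finite := by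
  rw [setOf_isMaximal_eq_image_comap_of_ker_le_jacobson hf hker,
    Set.finite_image_iff (comap_injective_of_surjective f hf).injOn]

end Ideal

def HasFiniteCharacter (S : Type*) [CommRing S] : Prop :=
  ∀ x : S, x ≠ 0 → ¬IsUnit x → {m : Ideal S | m.IsMaximal ∧ x ∈ m}.Finite

namespace HasFiniteCharacter

variable {S : Type*} [CommRing S]

theorem of_finite_setOf_isMaximal (h : {m : Ideal S | m.IsMaximal}.Finite) :
    HasFiniteCharacter S :=
  fun _ _ _ => h.subset fun _ hm => hm.1

theorem finite_setOf_isMaximal (h : HasFiniteCharacter S) {x : S} (hx0 : x ≠ 0)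
    (hx : x ∈ Ideal.jacobson ⊥) : {m : Ideal S | m.IsMaximal}.Finite := by
  have hxu : ¬IsUnit x := fun hu => hx0 <| by
    have hbot : (⊥ : Ideal S) = ⊤ :=
      Ideal.jacobson_eq_top_iff.mp (Ideal.eq_top_of_isUnit_mem _ hx hu)
    rw [← Ideal.mem_bot, hbot]
    exact Submodule.mem_top
  exact (h x hx0 hxu).subset fun m hm => ⟨hm, hm.jacobson_bot_le hx⟩

end HasFiniteCharacter

section AndersonRing

variable (R : Type*) [CommRing R]

@[simp]
theorem mem_andersonSubmonoid {f : R[X]} : f ∈ andersonSubmonoid R ↔ f.coeff 0 = 1 :=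
  Iff.rfl

noncomputable def andersonConstantCoeff : AndersonRing R →+* R :=
  IsLocalization.lift (M := andersonSubmonoid R) (g := constantCoeff) fun s => by
    simp [(mem_andersonSubmonoid R).mp s.2]

variable {R}

@[simp]
theorem andersonConstantCoeff_algebraMap (f : R[X]) :
    andersonConstantCoeff R (algebraMap R[X] (AndersonRing R) f) = f.coeff 0 :=
  IsLocalization.lift_eq _ f

theorem andersonConstantCoeff_surjective : Function.Surjective (andersonConstantCoeff R) :=
  fun r => ⟨algebraMap R[X] (AndersonRing R) (C r), by simp⟩

theorem isUnit_of_andersonConstantCoeff_eq_one {z : AndersonRing R}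
    (hz : andersonConstantCoeff R z = 1) : IsUnit z := by
  obtain ⟨⟨f, s⟩, rfl⟩ := IsLocalization.mk'_surjective (andersonSubmonoid R) z
  have hf : f ∈ andersonSubmonoid R := by
    simpa [constantCoeff_apply, (mem_andersonSubmonoid R).mp s.2] using
      (IsLocalization.lift_mk'_spec _ _ _ _).mp hz
  refine isUnit_of_mul_isUnit_left (y := algebraMap R[X] (AndersonRing R) s) ?_
  rw [IsLocalization.mk'_spec]
  exact IsLocalization.map_units _ ⟨f, hf⟩

theorem ker_andersonConstantCoeff_le_jacobson :
    RingHom.ker (andersonConstantCoeff R) ≤ Ideal.jacobson ⊥ := fun x hx =>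
  Ideal.mem_jacobson_bot.mpr fun y => isUnit_of_andersonConstantCoeff_eq_one <| by
    simp [RingHom.mem_ker.mp hx]

theorem algebraMap_X_ne_zero [Nontrivial R] : algebraMap R[X] (AndersonRing R) X ≠ 0 := by
  rw [Ne, IsLocalization.map_eq_zero_iff (andersonSubmonoid R)]
  rintro ⟨s, hs⟩
  have := congr_arg (coeff · 1) hs
  simp only [coeff_mul_X, coeff_zero] at this
  exact one_ne_zero (((mem_andersonSubmonoid R).mp s.2).symm.trans this)

end AndersonRing

/-- The Anderson ring `R[X]_A` has finite character (every nonzero nonunit lies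
in only finitely many maximal ideals) iff `R` has only finitely many maximal
ideals. -/
theorem anderson_finite_character_iff (R : Type*) [CommRing R] :
    (∀ x : AndersonRing R, x ≠ 0 → ¬ IsUnit x →
      {m : Ideal (AndersonRing R) | m.IsMaximal ∧ x ∈ m}.Finite) ↔
    {M : Ideal R | M.IsMaximal}.Finite := by
  change HasFiniteCharacter (AndersonRing R) ↔ _
  have hmax := Ideal.finite_setOf_isMaximal_iff_of_ker_le_jacobson
    andersonConstantCoeff_surjective (ker_andersonConstantCoeff_le_jacobson (R := R))
  refine ⟨fun hfc => ?_, fun hfin => .of_finite_setOf_isMaximal (hmax.mpr hfin)⟩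
  rcases subsingleton_or_nontrivial R with _ | _
  · exact Set.toFinite _
  exact hmax.mp (hfc.finite_setOf_isMaximal algebraMap_X_ne_zero
    (ker_andersonConstantCoeff_le_jacobson (by simp)))
end

section
/- If R is a commutative ring with identity of finite Krull dimension, then the Krull dimension of the Anderson ring R[X]_A equals the Krull dimension of the polynomial ring R[X]. -/
open Polynomial

/-!
Localization never raises Krull dimension, so only `dim R[X] ≤ dim R[X]_A` needs an argument.
Let `P` be a prime of `R[X]` and `p = P ∩ R`. The primes of `R[X]` over `p` correspond to those of
`κ(p)[X]`, so they form chains of length at most one, with bottom `p[X]`; by induction on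
`ht p[X]` this gives `ht P ≤ ht p[X] + 1`. Since `p[X] < p + (X) = {f | f(0) ∈ p}`, the prime
`p + (X)` has height at least `ht P`, and it misses `A` because its elements have constant term
in `p`. Primes disjoint from `A` keep their height in `R[X]_A`.
-/

theorem IsLocalization.ringKrullDim_le {R S : Type*} [CommRing R] [CommRing S] [Algebra R S]
    (M : Submonoid R) [IsLocalization M S] : ringKrullDim S ≤ ringKrullDim R := by
  refine (ringKrullDim_le_iff_height_le _).mpr fun J _ => ?_
  rw [← IsLocalization.height_under M J]
  exact Ideal.height_le_ringKrullDim_of_isPrime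

theorem IsLocalization.height_le_ringKrullDim_of_disjoint {R S : Type*} [CommRing R] [CommRing S]
    [Algebra R S] (M : Submonoid R) [IsLocalization M S] (p : Ideal R) [p.IsPrime]
    (h : Disjoint (M : Set R) p) : p.height ≤ ringKrullDim S := by
  have := IsLocalization.isPrime_of_isPrime_disjoint M S p ‹_› h
  rw [← IsLocalization.height_map_of_disjoint (S := S) M p h]
  exact Ideal.height_le_ringKrullDim_of_isPrime

namespace Polynomial

variable {R : Type*} [CommRing R]

lemma comap_C_map_C_s5 (p : Ideal R) : (p.map C).comap C = p := by
  ext r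
  refine ⟨fun h => by simpa using Ideal.mem_map_C_iff.mp h 0,
    fun h => Ideal.mem_map_C_iff.mpr fun n => ?_⟩
  rw [coeff_C]
  split_ifs
  exacts [h, p.zero_mem]

lemma krullDim_preimage_comap_C_le_one (p : PrimeSpectrum R) :
    Order.krullDim (PrimeSpectrum.comap C ⁻¹' {p} : Set (PrimeSpectrum R[X])) ≤ 1 := by
  rw [show C = algebraMap R R[X] from rfl, Order.krullDim_eq_of_orderIso
      (PrimeSpectrum.preimageOrderIsoFiber R R[X] p), ← ringKrullDim,
      ← ringKrullDim_eq_of_ringEquiv (polyEquivTensor R p.asIdeal.ResidueField).toRingEquiv]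
  simp [ringKrullDim_eq_zero_of_field]

lemma eq_map_C_comap_C_of_lt {P Q : Ideal R[X]} [P.IsPrime] [Q.IsPrime] (hPQ : P < Q)
    (h : P.comap C = Q.comap C) : P = (P.comap C).map C := by
  let p : PrimeSpectrum R := ⟨P.comap C, inferInstance⟩
  let F := (PrimeSpectrum.comap C ⁻¹' {p} : Set (PrimeSpectrum R[X]))
  let P' : F := ⟨⟨P, inferInstance⟩, rfl⟩
  let Q' : F := ⟨⟨Q, inferInstance⟩, PrimeSpectrum.ext h.symm⟩
  let pX : F := ⟨⟨p.asIdeal.map C, Ideal.isPrime_map_C_of_isPrime⟩,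
    PrimeSpectrum.ext (comap_C_map_C_s5 _)⟩
  have hP'Q' : P' < Q' := hPQ
  have hpXP' : pX ≤ P' := Ideal.map_comap_le
  refine le_antisymm ?_ hpXP'
  rcases Order.krullDim_le_one_iff.mp (krullDim_preimage_comap_C_le_one p) P' with hmin | hmax
  · exact hmin hpXP'
  · exact absurd hP'Q' hmax.not_lt

lemma map_C_lt_map_C {p q : Ideal R} (h : q < p) : q.map C < p.map C :=
  lt_of_le_of_ne (Ideal.map_mono h.le) fun he => h.ne <| by
    rw [← comap_C_map_C_s5 q, he, comap_C_map_C_s5]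

lemma height_le_height_map_C_comap_C_add_one (P : Ideal R[X]) [P.IsPrime] :
    P.height ≤ ((P.comap C).map C).height + 1 := by
  suffices key : ∀ m : ℕ, ∀ P : Ideal R[X], P.IsPrime → ((P.comap C).map C).height = m →
      P.height ≤ m + 1 by
    cases hm : ((P.comap C).map C).height with
    | top => simp
    | coe m => exact key m P ‹_› hm
  intro m
  induction m using Nat.strong_induction_on with
  | _ m ih =>
  intro P hP hm
  rw [show (m : ℕ∞) + 1 = ((m + 1 : ℕ) : ℕ∞) by push_cast; rfl, Ideal.height_le_iff]
  intro Q hQ hQP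
  rcases (Ideal.comap_mono hQP.le : Q.comap C ≤ P.comap C).eq_or_lt with hqp | hqp
  · rw [eq_map_C_comap_C_of_lt hQP hqp, hqp, hm]
    exact_mod_cast m.lt_succ_self
  · have hlt : ((Q.comap C).map C).height + 1 ≤ m :=
      hm ▸ Ideal.height_add_one_le_of_lt_of_isPrime (map_C_lt_map_C hqp)
    obtain ⟨k, hk⟩ : ∃ k : ℕ, ((Q.comap C).map C).height = k := by
      cases h : ((Q.comap C).map C).height with
      | top => simp [h] at hlt
      | coe k => exact ⟨k, rfl⟩
    have hkm : k < m := by rw [hk] at hlt; exact_mod_cast hlt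
    calc Q.height ≤ k + 1 := ih k hkm Q hQ hk
      _ < (m + 1 : ℕ) := by exact_mod_cast Nat.succ_lt_succ hkm

lemma map_C_lt_comap_constantCoeff {p : Ideal R} (hp : p ≠ ⊤) :
    p.map C < p.comap constantCoeff := by
  refine lt_of_le_of_ne (Ideal.map_le_iff_le_comap.mpr fun r hr => by simpa using hr)
    fun h => hp ?_
  have hX : X ∈ p.map C := h ▸ (by simp : X ∈ p.comap constantCoeff)
  exact (Ideal.eq_top_iff_one _).mpr (by simpa using Ideal.mem_map_C_iff.mp hX 1)

theorem ringKrullDim_of_isLocalization_of_isUnit_coeff_zero {S : Type*} [CommRing S]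
    [Algebra R[X] S] (M : Submonoid R[X]) [IsLocalization M S]
    (hM : ∀ f ∈ M, IsUnit (f.coeff 0)) :
    ringKrullDim S = ringKrullDim R[X] := by
  refine le_antisymm (IsLocalization.ringKrullDim_le (S := S) M) <|
    (ringKrullDim_le_iff_height_le _).mpr fun P _ => ?_
  have hp : P.comap C ≠ ⊤ := Ideal.IsPrime.ne_top'
  have hdisj : Disjoint (M : Set R[X]) ((P.comap C).comap constantCoeff) :=
    Set.disjoint_left.mpr fun f hfM hfp => hp (Ideal.eq_top_of_isUnit_mem _ hfp (hM f hfM))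
  calc (P.height : WithBot ℕ∞) ≤ (((P.comap C).map C).height + 1 : ℕ∞) := by
        exact_mod_cast height_le_height_map_C_comap_C_add_one P
    _ ≤ ((P.comap C).comap constantCoeff).height := by
        exact_mod_cast Ideal.height_add_one_le_of_lt_of_isPrime (map_C_lt_comap_constantCoeff hp)
    _ ≤ ringKrullDim S := IsLocalization.height_le_ringKrullDim_of_disjoint M _ hdisj

end Polynomial

theorem anderson_ringKrullDim_general (R : Type*) [CommRing R] :
    ringKrullDim (AndersonRing R) = ringKrullDim (Polynomial R) :=
  Polynomial.ringKrullDim_of_isLocalization_of_isUnit_coeff_zero (andersonSubmonoid R)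
    fun f hf => (show f.coeff 0 = 1 from hf) ▸ isUnit_one

/-- If `R` has finite Krull dimension, then the Krull dimension of the Anderson
ring `R[X]_A` equals the Krull dimension of `R[X]`. -/
theorem anderson_ringKrullDim (R : Type*) [CommRing R]
    (h : ringKrullDim R < ⊤) :
    ringKrullDim (AndersonRing R) = ringKrullDim (Polynomial R) :=
  anderson_ringKrullDim_general R
end

section
/- A commutative ring R with identity is locally Noetherian (i.e., R_M is Noetherian for every maximal ideal M of R) if and only if its Anderson ring R[X]_A is locally Noetherian (i.e., (R[X]_A)_m is Noetherian for every maximal ideal m of R[X]_A). -/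
/-!
For a prime `Q` of `R[X]` lying over `P = Q ∩ R`, the local ring `R[X]_Q` is a localization of
`R_P[X]`, which is Noetherian by the Hilbert basis theorem as soon as `R_P` (a localization of some
`R_M`, `M` maximal) is. Every local ring of `R[X]_A` is such an `R[X]_Q`. Conversely, for a maximal
ideal `M` of `R` the maximal ideal `Q = M + X R[X]` misses `A`, so it survives in `R[X]_A`, and
`R[X]_Q` maps onto `R_M` by `X ↦ 0`.
-/

open Polynomial

def IsLocallyNoetherianRing (R : Type*) [CommRing R] : Prop :=
  ∀ (M : Ideal R) (hM : M.IsMaximal), IsNoetherianRing (@Localization.AtPrime R _ M hM.isPrime)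

section

variable {R : Type*} [CommRing R]

theorem IsNoetherianRing.of_isLocalization_of_le {M N : Submonoid R} (h : M ≤ N)
    (S T : Type*) [CommRing S] [CommRing T] [Algebra R S] [Algebra R T]
    [IsLocalization M S] [IsLocalization N T] [IsNoetherianRing S] : IsNoetherianRing T := by
  let _ := IsLocalization.localizationAlgebraOfSubmonoidLe S T M N h
  have := IsLocalization.localization_isScalarTower_of_submonoid_le S T M N h
  have := IsLocalization.isLocalization_of_submonoid_le S T M N h
  exact IsLocalization.isNoetherianRing (N.map (algebraMap R S)) T ‹_›

theorem IsLocallyNoetherianRing.isNoetherianRing_localization_atPrime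
    (hR : IsLocallyNoetherianRing R) (P : Ideal R) [P.IsPrime] :
    IsNoetherianRing (Localization.AtPrime P) := by
  obtain ⟨M, hM, hPM⟩ := P.exists_le_maximal (Ideal.IsPrime.ne_top ‹_›)
  have := hR M hM
  exact .of_isLocalization_of_le (M := M.primeCompl) (N := P.primeCompl)
    (fun _ hx hxP => hx (hPM hxP)) (Localization.AtPrime M) _

theorem isLocallyNoetherianRing_localization_of_forall_isPrime (A : Submonoid R)
    (hR : ∀ (Q : Ideal R) [Q.IsPrime], IsNoetherianRing (Localization.AtPrime Q)) :
    IsLocallyNoetherianRing (Localization A) := fun m hm =>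
  have := hm.isPrime
  .of_isLocalization_of_le (M := (m.comap (algebraMap R _)).primeCompl) le_rfl
    (Localization.AtPrime (m.comap (algebraMap R _))) _

end

universe u

theorem isNoetherianRing_localization_atPrime_of_surjective {R S : Type u} [CommRing R]
    [CommRing S] (f : R →+* S) (hf : Function.Surjective f) (P : Ideal S) [P.IsPrime]
    [IsNoetherianRing (Localization.AtPrime (P.comap f))] :
    IsNoetherianRing (Localization.AtPrime P) :=
  isNoetherianRing_of_surjective _ _ _ (RingHom.surjective_localRingHom_of_surjective f hf P)

namespace IsLocallyNoetherianRing

variable {R : Type*} [CommRing R]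

attribute [local instance] Polynomial.algebra in
theorem isNoetherianRing_polynomial_localization_atPrime (hR : IsLocallyNoetherianRing R)
    (Q : Ideal R[X]) [Q.IsPrime] : IsNoetherianRing (Localization.AtPrime Q) := by
  let P := Q.comap C
  have := hR.isNoetherianRing_localization_atPrime P
  have := Polynomial.isLocalization P.primeCompl (Localization.AtPrime P)
  exact .of_isLocalization_of_le (N := Q.primeCompl)
    (Submonoid.map_le_iff_le_comap.mpr <|
      (Localization.le_comap_primeCompl_iff (f := C)).mpr le_rfl)
    (Localization.AtPrime P)[X] _

theorem localization_polynomial (hR : IsLocallyNoetherianRing R) (A : Submonoid R[X]) :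
    IsLocallyNoetherianRing (Localization A) :=
  isLocallyNoetherianRing_localization_of_forall_isPrime A fun Q _ =>
    hR.isNoetherianRing_polynomial_localization_atPrime Q

theorem of_localization_polynomial {A : Submonoid R[X]} (hA : ∀ f ∈ A, IsUnit (f.coeff 0))
    (hRA : IsLocallyNoetherianRing (Localization A)) : IsLocallyNoetherianRing R := by
  intro M hM
  have hsurj : Function.Surjective (constantCoeff : R[X] →+* R) :=
    fun r => ⟨C r, coeff_C_zero⟩
  let Q := M.comap constantCoeff
  have hQ : Q.IsMaximal := Ideal.comap_isMaximal_of_surjective _ hsurj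
  have hdisj : Disjoint (A : Set R[X]) Q := Set.disjoint_left.mpr fun f hf hfQ =>
    hM.ne_top (M.eq_top_of_isUnit_mem hfQ (hA f hf))
  let m := Q.map (algebraMap R[X] (Localization A))
  have hmQ : m.comap (algebraMap R[X] (Localization A)) = Q :=
    IsLocalization.under_map_of_isPrime_disjoint A _ hQ.isPrime hdisj
  have : (m.under R[X]).IsMaximal := by rwa [Ideal.under, hmQ]
  have hm : m.IsMaximal := .of_isLocalization_of_disjoint A
  have := hm.isPrime
  have := hRA m hm
  have : IsNoetherianRing (Localization.AtPrime Q) :=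
    .of_isLocalization_of_le (M := (m.comap _).primeCompl) (N := Q.primeCompl)
      (fun _ hx hxQ => hx (hmQ.ge hxQ)) (Localization.AtPrime m) _
  exact isNoetherianRing_localization_atPrime_of_surjective constantCoeff hsurj M

end IsLocallyNoetherianRing

/-- `R` is locally Noetherian iff its Anderson ring `R[X]_A` is locally
Noetherian. -/
theorem anderson_locallyNoetherian_iff (R : Type*) [CommRing R] :
    (∀ (M : Ideal R) (hM : M.IsMaximal),
      IsNoetherianRing (@Localization.AtPrime R _ M hM.isPrime)) ↔
    (∀ (m : Ideal (AndersonRing R)) (hm : m.IsMaximal),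
      IsNoetherianRing (@Localization.AtPrime (AndersonRing R) _ m hm.isPrime)) :=
  ⟨fun h => IsLocallyNoetherianRing.localization_polynomial h _,
    IsLocallyNoetherianRing.of_localization_polynomial fun f hf =>
      (show f.coeff 0 = 1 from hf) ▸ isUnit_one⟩
end

section
/- A commutative ring R with identity is Noetherian if and only if its Anderson ring R[X]_A is Noetherian. -/
open Polynomial

/-- `R` is Noetherian iff its Anderson ring `R[X]_A` is Noetherian. -/
theorem anderson_isNoetherianRing_iff (R : Type*) [CommRing R] :
    IsNoetherianRing R ↔ IsNoetherianRing (AndersonRing R) := by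
  constructor
  · intro h
    have hp : IsNoetherianRing (Polynomial R) := Polynomial.isNoetherianRing
    exact IsLocalization.isNoetherianRing (andersonSubmonoid R) (AndersonRing R) hp
  · intro h
    have hu : ∀ f : andersonSubmonoid R,
        IsUnit ((Polynomial.evalRingHom (0 : R)) (f : Polynomial R)) := by
      intro f
      have h1 : (f : Polynomial R).eval 0 = 1 := by
        rw [← Polynomial.coeff_zero_eq_eval_zero]
        exact f.2
      simp [h1]
    let φ := IsLocalization.lift (M := andersonSubmonoid R) (S := AndersonRing R) hu
    have hs : Function.Surjective φ := by
      intro r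
      refine ⟨algebraMap (Polynomial R) (AndersonRing R) (Polynomial.C r), ?_⟩
      simp [φ, IsLocalization.lift_eq]
    exact isNoetherianRing_of_surjective (AndersonRing R) R φ hs
end

section
/- For every nontrivial commutative ring R with identity, the Anderson ring R[X]_A is never a Hilbert (Jacobson) ring; that is, it is not the case that every prime ideal of R[X]_A is an intersection of maximal ideals. -/
open Polynomial

/-- A localization fraction whose numerator lies in the submonoid is a unit. -/
lemma anderson_mk_isUnit {R : Type*} [CommRing R] (a : Polynomial R)
    (ha : a ∈ andersonSubmonoid R) (s : andersonSubmonoid R) :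
    IsUnit (Localization.mk a s : AndersonRing R) := by
  refine isUnit_iff_exists_inv.mpr ⟨Localization.mk (s : Polynomial R) ⟨a, ha⟩, ?_⟩
  rw [Localization.mk_mul, mul_comm a (s : Polynomial R)]
  exact Localization.mk_self (s * ⟨a, ha⟩)

/-- For a nontrivial commutative ring `R`, the Anderson ring `R[X]_A` is never
a Hilbert (Jacobson) ring. -/
theorem anderson_not_jacobsonRing (R : Type*) [CommRing R] [Nontrivial R] :
    ¬ IsJacobsonRing (AndersonRing R) := by
  intro h
  set x : AndersonRing R := algebraMap (Polynomial R) (AndersonRing R) X with hx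
  -- `x` lies in the Jacobson radical of `⊥`
  have hxjac : x ∈ Ideal.jacobson (⊥ : Ideal (AndersonRing R)) := by
    rw [Ideal.mem_jacobson_bot]
    intro y
    induction y using Localization.induction_on with
    | H p =>
      obtain ⟨f, s⟩ := p
      have : x * Localization.mk f s + 1 =
          Localization.mk (X * f + (s : Polynomial R)) s := by
        rw [hx, ← Localization.mk_one_eq_algebraMap, Localization.mk_mul, one_mul,
          show (1 : AndersonRing R) = Localization.mk 1 1 from (Localization.mk_self 1).symm,
          Localization.add_mk]
        congr 1
        · simp [add_comm]
        · rw [mul_one]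
      rw [this]
      apply anderson_mk_isUnit
      have hs : (s : Polynomial R).coeff 0 = 1 := s.2
      simp [andersonSubmonoid, Polynomial.mul_coeff_zero, hs]
  -- hence `x` is nilpotent
  have hxnil : IsNilpotent x := by
    have hrad : (nilradical (AndersonRing R)).IsRadical :=
      Ideal.radical_isRadical (0 : Ideal (AndersonRing R))
    have := h.out hrad
    have hmem : x ∈ nilradical (AndersonRing R) := by
      rw [← this]
      exact Ideal.jacobson_mono bot_le hxjac
    exact mem_nilradical.mp hmem
  -- but `x` is not nilpotent
  obtain ⟨n, hn⟩ := hxnil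
  rw [hx, ← map_pow, IsLocalization.map_eq_zero_iff (andersonSubmonoid R)] at hn
  obtain ⟨s, hs⟩ := hn
  have h1 : ((s : Polynomial R) * X ^ n).coeff n = 1 := by
    have h2 : (s : Polynomial R).coeff 0 = 1 := s.2
    have := Polynomial.coeff_mul_X_pow (s : Polynomial R) n 0
    simpa [h2] using this
  rw [hs] at h1
  simp only [Polynomial.coeff_zero] at h1
  exact one_ne_zero h1.symm
end

section
/- For an ideal I of a commutative ring R with identity, the extension I·R[X]_A to the Anderson ring is finitely generated if and only if I is finitely generated, and I·R[X]_A is principal if and only if I is principal. -/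
open Polynomial

/-- Evaluation at `0` sends the Anderson submonoid to units, giving a
retraction `R[X]_A → R`. -/
noncomputable def andersonRetract (R : Type*) [CommRing R] : AndersonRing R →+* R :=
  IsLocalization.lift (M := andersonSubmonoid R) (g := Polynomial.evalRingHom 0)
    (by
      intro s
      have hs : (s : Polynomial R).coeff 0 = 1 := s.2
      have : (Polynomial.evalRingHom 0) (s : Polynomial R) = 1 := by
        simp [Polynomial.evalRingHom, ← Polynomial.coeff_zero_eq_eval_zero, hs]
      rw [this]
      exact isUnit_one)

lemma andersonRetract_comp (R : Type*) [CommRing R] :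
    (andersonRetract R).comp (andersonMap R) = RingHom.id R := by
  ext a
  simp [andersonRetract, andersonMap, IsLocalization.lift_eq]

/-- For an ideal `I` of `R`, the extension `I·R[X]_A` is finitely generated
iff `I` is, and `I·R[X]_A` is principal iff `I` is. -/
theorem anderson_fg_and_principal_iff (R : Type*) [CommRing R] (I : Ideal R) :
    ((Ideal.map (andersonMap R) I).FG ↔ I.FG) ∧
    ((Ideal.map (andersonMap R) I).IsPrincipal ↔ I.IsPrincipal) := by
  have key : ∀ J : Ideal R,
      Ideal.map (andersonRetract R) (Ideal.map (andersonMap R) J) = J := by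
    intro J
    rw [Ideal.map_map, andersonRetract_comp, Ideal.map_id]
  constructor
  · constructor
    · intro h
      rw [← key I]
      exact h.map _
    · intro h
      exact h.map _
  · constructor
    · rintro ⟨x, hx⟩
      refine ⟨andersonRetract R x, ?_⟩
      rw [← key I, hx]
      simp [Ideal.map_span]
    · rintro ⟨x, hx⟩
      refine ⟨andersonMap R x, ?_⟩
      rw [hx]
      simp [Ideal.map_span]
end

section
/- For any ideal I of a commutative ring R with identity, the contraction of the extension I·R[X]_A back to R equals I (i.e., I·R[X]_A ∩ R = I); consequently, for ideals I and J of R, I = J if and only if I·R[X]_A = J·R[X]_A. -/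
open Polynomial

/-- For any ideal `I` of `R`, `I·R[X]_A ∩ R = I`; consequently `I = J` iff
`I·R[X]_A = J·R[X]_A`. -/
theorem anderson_comap_map (R : Type*) [CommRing R] (I J : Ideal R) :
    Ideal.comap (andersonMap R) (Ideal.map (andersonMap R) I) = I ∧
    (I = J ↔ Ideal.map (andersonMap R) I = Ideal.map (andersonMap R) J) := by
  have key : ∀ K : Ideal R, Ideal.comap (andersonMap R) (Ideal.map (andersonMap R) K) = K := by
    intro K
    apply le_antisymm
    · intro r hr
      rw [Ideal.mem_comap] at hr
      have h1 : Ideal.map (andersonMap R) K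
          = Ideal.map (algebraMap (Polynomial R) (AndersonRing R))
              (Ideal.map Polynomial.C K) := by
        rw [Ideal.map_map]; rfl
      rw [h1, IsLocalization.mem_map_algebraMap_iff (andersonSubmonoid R)] at hr
      obtain ⟨⟨p, f⟩, hpf⟩ := hr
      have heq : algebraMap (Polynomial R) (AndersonRing R) (Polynomial.C r * (f : Polynomial R))
          = algebraMap (Polynomial R) (AndersonRing R) (p : Polynomial R) := by
        rw [map_mul]; exact hpf
      obtain ⟨c, hc⟩ := IsLocalization.exists_of_eq (M := andersonSubmonoid R) heq
      have hf : (f : Polynomial R).coeff 0 = 1 := f.2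
      have hcc : (c : Polynomial R).coeff 0 = 1 := c.2
      have hp : (p : Polynomial R).coeff 0 ∈ K := by
        have hle : Ideal.map (Polynomial.C : R →+* Polynomial R) K
            ≤ Ideal.comap (Polynomial.constantCoeff) K :=
          Ideal.map_le_iff_le_comap.mpr (fun a ha => by simpa using ha)
        simpa using hle p.2
      have h0 := congrArg (fun q => Polynomial.coeff q 0) hc
      simp only [Polynomial.mul_coeff_zero, Polynomial.coeff_C_zero, hf, hcc,
        one_mul, mul_one] at h0
      rwa [h0]
    · exact Ideal.le_comap_map
  refine ⟨key I, ⟨fun h => h ▸ rfl, fun h => ?_⟩⟩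
  rw [← key I, ← key J, h]
end

section
/- For an ideal I of a commutative ring R with identity, I is locally principal (i.e., I·R_M is a principal ideal of R_M for every maximal ideal M of R) if and only if its extension I·R[X]_A is a locally principal ideal of the Anderson ring R[X]_A. -/
/-!
For a maximal ideal `m` of `R[X]_A`, the local map `R → (R[X]_A)_m` factors through `R_M` for any
maximal `M` containing the prime it pulls back, so principality passes up. Conversely, for `M`
maximal, `M[X]` misses `A`, so it lies in `Q = m ∩ R[X]` for a maximal `m` of `R[X]_A`, and
`(R[X]_A)_m = R[X]_Q`. Then `I·R[X]_Q` is generated by some `f ∈ I[X]`, and each `a ∈ I` has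
`w·a = f·h` with `w ∉ M[X]`, so some coefficient of `w` is a unit of `R_M`. Comparing coefficients,
`I·R_M` is generated by the coefficients of `f`, and for `a, b ∈ I` either `a ∈ b·R_M` or (when
`h_b ∈ M[X]`) `b ∈ M·I·R_M`. By Nakayama `I·R_M` is zero or generated by one such `b`.
-/

open Polynomial

open IsLocalRing

section General

variable {R S : Type*} [CommRing R] [CommRing S]

theorem Ideal.isPrincipal_map_of_forall_isMaximal [IsLocalRing S] (φ : R →+* S) {I : Ideal R}
    (H : ∀ (M : Ideal R) [M.IsMaximal],
      (I.map (algebraMap R (Localization.AtPrime M))).IsPrincipal) :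
    (I.map φ).IsPrincipal := by
  obtain ⟨M, hM, hle⟩ := ((maximalIdeal S).comap φ).exists_le_maximal Ideal.IsPrime.ne_top'
  have hunit : ∀ y : M.primeCompl, IsUnit (φ y) := fun y =>
    notMem_maximalIdeal.mp fun hy => y.2 (hle hy)
  rw [← IsLocalization.lift_comp (S := Localization.AtPrime M) hunit, ← Ideal.map_map]
  exact (H M).map_ringHom _

theorem IsLocalization.exists_mem_forall_mul_mem_span_singleton {L : Type*} [CommRing L]
    [Algebra R L] (T : Submonoid R) [IsLocalization T L] {J : Ideal R}
    (hJ : (J.map (algebraMap R L)).IsPrincipal) :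
    ∃ f ∈ J, ∀ a ∈ J, ∃ t ∈ T, t * a ∈ Ideal.span {f} := by
  obtain ⟨g, hg⟩ := hJ
  rw [Ideal.submodule_span_eq] at hg
  obtain ⟨⟨⟨f, hf⟩, t⟩, hgt⟩ :=
    (mem_map_algebraMap_iff T L).mp (hg ▸ Ideal.mem_span_singleton_self g)
  have hspan : J.map (algebraMap R L) = (Ideal.span {f}).map (algebraMap R L) := by
    rw [hg, Ideal.map_span, Set.image_singleton, ← hgt,
      Ideal.span_singleton_mul_right_unit (map_units L t)]
  refine ⟨f, hf, fun a ha => ?_⟩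
  rw [← algebraMap_mem_map_algebraMap_iff T (S := L), ← hspan]
  exact Ideal.mem_map_of_mem _ ha

theorem Ideal.isPrincipal_map_of_forall_mem_span_or_mem_maximalIdeal_mul [IsLocalRing S]
    (φ : R →+* S) {I : Ideal R} (hfg : (I.map φ).FG)
    (h : ∀ a ∈ I, ∀ b ∈ I, φ a ∈ Ideal.span {φ b} ∨ φ b ∈ maximalIdeal S * I.map φ) :
    (I.map φ).IsPrincipal := by
  by_cases hsmall : ∀ b ∈ I, φ b ∈ maximalIdeal S * I.map φ
  · have hbot : I.map φ = ⊥ :=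
      Submodule.eq_bot_of_le_smul_of_le_jacobson_bot _ _ hfg
        (Ideal.map_le_iff_le_comap.mpr hsmall) (maximalIdeal_le_jacobson ⊥)
    rw [hbot]
    exact bot_isPrincipal
  · push Not at hsmall
    obtain ⟨b, hb, hbnot⟩ := hsmall
    refine ⟨φ b, le_antisymm ?_ ?_⟩
    · exact Ideal.map_le_iff_le_comap.mpr fun a ha => (h a ha b hb).resolve_right hbnot
    · exact (Ideal.span_singleton_le_iff_mem _).mpr (Ideal.mem_map_of_mem φ hb)

end General

section Polynomial

variable {R : Type*} [CommRing R] {M : Ideal R} [M.IsPrime]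

local notation "σ" => algebraMap R (Localization.AtPrime M)

theorem algebraMap_mem_map_of_mul_C_mem_map_C {K : Ideal R} {w : R[X]} {a : R}
    (hw : w ∉ M.map C) (h : w * C a ∈ K.map C) : σ a ∈ K.map σ := by
  obtain ⟨n, hn⟩ : ∃ n, w.coeff n ∉ M := by
    simpa [Ideal.mem_map_C_iff] using hw
  rw [IsLocalization.algebraMap_mem_map_algebraMap_iff M.primeCompl]
  exact ⟨w.coeff n, hn, by simpa using Ideal.mem_map_C_iff.mp h n⟩

variable {I : Ideal R} {f : R[X]}

theorem map_algebraMap_eq_map_contentIdeal (hfI : f ∈ I.map C)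
    (hdvd : ∀ a ∈ I, ∃ w ∉ M.map C, f ∣ w * C a) :
    I.map σ = f.contentIdeal.map σ := by
  refine le_antisymm (Ideal.map_le_iff_le_comap.mpr fun a ha => ?_) (Ideal.map_mono ?_)
  · obtain ⟨w, hw, h, hh⟩ := hdvd a ha
    refine algebraMap_mem_map_of_mul_C_mem_map_C hw (hh ▸ Ideal.mul_mem_right _ _ ?_)
    exact Ideal.mem_map_C_iff.mpr f.coeff_mem_contentIdeal
  · refine Ideal.span_le.mpr fun c hc => ?_
    obtain ⟨n, -, rfl⟩ := mem_coeffs_iff.mp hc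
    exact Ideal.mem_map_C_iff.mp hfI n

theorem algebraMap_mem_span_or_mem_map_mul (hfI : f ∈ I.map C)
    (hdvd : ∀ a ∈ I, ∃ w ∉ M.map C, f ∣ w * C a) {a b : R} (ha : a ∈ I) (hb : b ∈ I) :
    σ a ∈ Ideal.span {σ b} ∨ σ b ∈ (M * I).map σ := by
  obtain ⟨w₁, hw₁, h₁, hh₁⟩ := hdvd a ha
  obtain ⟨w₂, hw₂, h₂, hh₂⟩ := hdvd b hb
  by_cases hw : w₁ * h₂ ∈ M.map C
  · right
    have hh₂M : h₂ ∈ M.map C :=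
      (Ideal.IsPrime.mem_or_mem inferInstance hw).resolve_left hw₁
    refine algebraMap_mem_map_of_mul_C_mem_map_C hw₂ ?_
    rw [hh₂, Ideal.map_mul, mul_comm (M.map C)]
    exact Ideal.mul_mem_mul hfI hh₂M
  · left
    have hab : w₁ * h₂ * C a = w₂ * h₁ * C b := by linear_combination h₂ * hh₁ - h₁ * hh₂
    have hmem : w₁ * h₂ * C a ∈ (Ideal.span {b}).map C := by
      rw [hab, Ideal.map_span, Set.image_singleton]
      exact Ideal.mul_mem_left _ _ (Ideal.mem_span_singleton_self _)
    simpa only [Ideal.map_span, Set.image_singleton] using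
      algebraMap_mem_map_of_mul_C_mem_map_C hw hmem

theorem isPrincipal_map_algebraMap_of_dvd_mul_C (hfI : f ∈ I.map C)
    (hdvd : ∀ a ∈ I, ∃ w ∉ M.map C, f ∣ w * C a) : (I.map σ).IsPrincipal := by
  refine Ideal.isPrincipal_map_of_forall_mem_span_or_mem_maximalIdeal_mul σ ?_
    fun a ha b hb => ?_
  · rw [map_algebraMap_eq_map_contentIdeal hfI hdvd]
    exact f.contentIdeal_FG.map σ
  · rw [← Localization.AtPrime.map_eq_maximalIdeal, ← Ideal.map_mul]
    exact algebraMap_mem_span_or_mem_map_mul hfI hdvd ha hb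

theorem isPrincipal_map_algebraMap_of_isPrincipal_map_atPrime {Q : Ideal R[X]} [Q.IsPrime]
    (hMQ : M.map C ≤ Q) (L : Type*) [CommRing L] [Algebra R[X] L] [IsLocalization.AtPrime L Q]
    (h : (I.map ((algebraMap R[X] L).comp C)).IsPrincipal) : (I.map σ).IsPrincipal := by
  rw [← Ideal.map_map] at h
  obtain ⟨f, hfI, hf⟩ := IsLocalization.exists_mem_forall_mul_mem_span_singleton Q.primeCompl h
  refine isPrincipal_map_algebraMap_of_dvd_mul_C hfI fun a ha => ?_
  obtain ⟨w, hw, hwa⟩ := hf (C a) (Ideal.mem_map_of_mem C ha)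
  exact ⟨w, fun hwM => hw (hMQ hwM), Ideal.mem_span_singleton.mp hwa⟩

end Polynomial

theorem exists_isMaximal_map_C_le_comap {R : Type*} [CommRing R] {M : Ideal R} (hM : M ≠ ⊤) :
    ∃ m : Ideal (AndersonRing R), m.IsMaximal ∧
      M.map C ≤ m.comap (algebraMap R[X] (AndersonRing R)) := by
  have hdisj : Disjoint (andersonSubmonoid R : Set R[X]) (M.map C : Set R[X]) :=
    Set.disjoint_left.mpr fun f (hf : f.coeff 0 = 1) hfM =>
      hM ((Ideal.eq_top_iff_one M).mpr (hf ▸ Ideal.mem_map_C_iff.mp hfM 0))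
  obtain ⟨m, hm, hle⟩ := Ideal.exists_le_maximal _
    ((IsLocalization.map_algebraMap_ne_top_iff_disjoint _ (AndersonRing R) _).mpr hdisj)
  exact ⟨m, hm, Ideal.map_le_iff_le_comap.mp hle⟩

/-- An ideal `I` of `R` is locally principal iff its extension `I·R[X]_A` to
the Anderson ring is locally principal. -/
theorem anderson_locally_principal_iff (R : Type*) [CommRing R] (I : Ideal R) :
    (∀ (M : Ideal R) (hM : M.IsMaximal),
      (Ideal.map (algebraMap R (@Localization.AtPrime R _ M hM.isPrime)) I).IsPrincipal) ↔
    (∀ (m : Ideal (AndersonRing R)) (hm : m.IsMaximal),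
      (Ideal.map (algebraMap (AndersonRing R) (@Localization.AtPrime (AndersonRing R) _ m hm.isPrime))
        (Ideal.map (andersonMap R) I)).IsPrincipal) := by
  constructor
  · intro H m hm
    have := hm.isPrime
    rw [Ideal.map_map]
    exact Ideal.isPrincipal_map_of_forall_isMaximal (S := Localization.AtPrime m) _
      fun M hM => H M hM
  · intro H M hM
    obtain ⟨m, hm, hMm⟩ := exists_isMaximal_map_C_le_comap hM.ne_top
    refine isPrincipal_map_algebraMap_of_isPrincipal_map_atPrime hMm (Localization.AtPrime m) ?_
    rw [IsScalarTower.algebraMap_eq R[X] (AndersonRing R), RingHom.comp_assoc, ← andersonMap,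
      ← Ideal.map_map]
    exact H m hm
end
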